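/- The derivative with respect to α, evaluated at α = π/12, of the function E(α) = 4·(sec α / 2)^p + 2·(√2/(1 - tan α))^p equals √3 · p · 2^{1+p/2} / (√3 - 1)^{p-2}, and in particular is strictly positive for every p > 0. -/

import Mathlib

open Real


/-- The energy of the family `S_α`: `E(α) = 4·(2/sec α)^p + 2·(√2/(1 - tan α))^p`,
where `sec α = 1/cos α`. -/
noncomputable def Efam (p : ℝ) (α : ℝ) : ℝ :=
  4 * (2 / (Real.cos α)⁻¹) ^ p + 2 * (Real.sqrt 2 / (1 - Real.tan α)) ^ p

/-- The derivative of `E` at `α = π/12` equals `√3·p·2^{1+p/2}/(√3-1)^{p-2}`,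
which is strictly positive for every `p > 0`. -/
theorem deriv_energy_at_pi_div_twelve (p : ℝ) (hp : 0 < p) :
    HasDerivAt (Efam p)
      (Real.sqrt 3 * p * 2 ^ (1 + p / 2) / (Real.sqrt 3 - 1) ^ (p - 2))
      (Real.pi / 12) ∧
    0 < Real.sqrt 3 * p * 2 ^ (1 + p / 2) / (Real.sqrt 3 - 1) ^ (p - 2) := by
  set x := π / 12 with hxdef
  have h3 : Real.sqrt 3 ^ 2 = 3 := Real.sq_sqrt (by norm_num)
  have h2 : Real.sqrt 2 ^ 2 = 2 := Real.sq_sqrt (by norm_num)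
  have h2pos : 0 < Real.sqrt 2 := Real.sqrt_pos.mpr (by norm_num)
  have h3pos : 0 < Real.sqrt 3 := Real.sqrt_pos.mpr (by norm_num)
  have h1lt : 1 < Real.sqrt 3 := by nlinarith [Real.sqrt_nonneg 3]
  have ht : 0 < Real.sqrt 3 - 1 := by linarith
  have hcosv : Real.cos x = Real.sqrt 2 * (Real.sqrt 3 + 1) / 4 := by
    have h : x = π/3 - π/4 := by rw [hxdef]; ring
    rw [h, Real.cos_sub, Real.cos_pi_div_three, Real.cos_pi_div_four,
      Real.sin_pi_div_three, Real.sin_pi_div_four]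
    ring
  have hsinv : Real.sin x = Real.sqrt 2 * (Real.sqrt 3 - 1) / 4 := by
    have h : x = π/3 - π/4 := by rw [hxdef]; ring
    rw [h, Real.sin_sub, Real.cos_pi_div_three, Real.cos_pi_div_four,
      Real.sin_pi_div_three, Real.sin_pi_div_four]
    ring
  have hcosne : Real.cos x ≠ 0 := by rw [hcosv]; positivity
  have htanv : Real.tan x = 2 - Real.sqrt 3 := by
    rw [Real.tan_eq_sin_div_cos, hsinv, hcosv]
    have hne : Real.sqrt 2 * (Real.sqrt 3 + 1) / 4 ≠ 0 := by positivity
    field_simp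
    nlinarith [h2, h3]
  have h1tanv : 1 - Real.tan x = Real.sqrt 3 - 1 := by rw [htanv]; ring
  have htne : 1 - Real.tan x ≠ 0 := by rw [h1tanv]; exact ht.ne'
  have hc2 : Real.cos x ^ 2 = (2 + Real.sqrt 3) / 4 := by
    rw [hcosv]
    linear_combination ((Real.sqrt 3 + 1)^2/16) * h2 + (1/8) * h3
  -- the common base
  have hbase : (2 : ℝ) * Real.cos x = Real.sqrt 2 / (Real.sqrt 3 - 1) := by
    rw [hcosv, eq_div_iff ht.ne']
    nlinarith [h2, h3]
  have hbasene : (2 : ℝ) * Real.cos x ≠ 0 := by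
    rw [hbase]; positivity
  have hbase2ne : Real.sqrt 2 / (1 - Real.tan x) ≠ 0 := by
    rw [h1tanv]; positivity
  -- derivatives
  have hA : HasDerivAt (fun α => (2 * Real.cos α) ^ p)
      ((2 * -Real.sin x) * p * (2 * Real.cos x) ^ (p - 1)) x :=
    ((Real.hasDerivAt_cos x).const_mul 2).rpow_const (Or.inl hbasene)
  have hBsub : HasDerivAt (fun α => 1 - Real.tan α) (0 - 1 / Real.cos x ^ 2) x :=
    (hasDerivAt_const x 1).sub (Real.hasDerivAt_tan hcosne)
  have hB : HasDerivAt (fun α => Real.sqrt 2 / (1 - Real.tan α))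
      ((0 * (1 - Real.tan x) - Real.sqrt 2 * (0 - 1 / Real.cos x ^ 2)) / (1 - Real.tan x) ^ 2) x :=
    (hasDerivAt_const x (Real.sqrt 2)).div hBsub htne
  have hB' : HasDerivAt (fun α => (Real.sqrt 2 / (1 - Real.tan α)) ^ p)
      (((0 * (1 - Real.tan x) - Real.sqrt 2 * (0 - 1 / Real.cos x ^ 2)) / (1 - Real.tan x) ^ 2)
        * p * (Real.sqrt 2 / (1 - Real.tan x)) ^ (p - 1)) x :=
    hB.rpow_const (Or.inl hbase2ne)
  have hE : HasDerivAt (Efam p)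
      (4 * ((2 * -Real.sin x) * p * (2 * Real.cos x) ^ (p - 1)) +
        2 * (((0 * (1 - Real.tan x) - Real.sqrt 2 * (0 - 1 / Real.cos x ^ 2)) / (1 - Real.tan x) ^ 2)
          * p * (Real.sqrt 2 / (1 - Real.tan x)) ^ (p - 1))) x := by
    have heq : Efam p = fun α => 4 * (2 * Real.cos α) ^ p +
        2 * (Real.sqrt 2 / (1 - Real.tan α)) ^ p := by
      funext a
      simp only [Efam]
      rw [div_eq_mul_inv, inv_inv]
    rw [heq]
    exact (hA.const_mul 4).add (hB'.const_mul 2)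
  -- simplify the derivative value
  have hcoef : 4 * (2 * -(Real.sqrt 2 * (Real.sqrt 3 - 1) / 4)) +
      2 * ((0 * (Real.sqrt 3 - 1) - Real.sqrt 2 * (0 - 1 / ((2 + Real.sqrt 3) / 4))) / (Real.sqrt 3 - 1) ^ 2)
      = 2 * Real.sqrt 2 * Real.sqrt 3 * (Real.sqrt 3 - 1) := by
    have h4ne : (2 + Real.sqrt 3) ≠ 0 := by positivity
    field_simp
    linear_combination (Real.sqrt 2 * (-Real.sqrt 3^3 + Real.sqrt 3 - 2)) * h3
  have hR : (Real.sqrt 2 / (1 - Real.tan x)) ^ (p - 1)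
      = Real.sqrt 2 ^ (p - 1) / (Real.sqrt 3 - 1) ^ (p - 1) := by
    rw [h1tanv, Real.div_rpow (Real.sqrt_nonneg 2) ht.le]
  have hpow2 : (2 : ℝ) ^ (1 + p / 2) = 2 * Real.sqrt 2 * Real.sqrt 2 ^ (p - 1) := by
    rw [Real.sqrt_eq_rpow, ← Real.rpow_mul (by norm_num : (0:ℝ) ≤ 2)]
    rw [show (2 : ℝ) * 2 ^ ((1:ℝ)/2) = 2 ^ (1:ℝ) * 2 ^ ((1:ℝ)/2) by rw [Real.rpow_one]]
    rw [← Real.rpow_add (by norm_num) , ← Real.rpow_add (by norm_num)]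
    congr 1; ring
  have hts : (Real.sqrt 3 - 1) ^ (p - 2) = (Real.sqrt 3 - 1) ^ (p - 1) / (Real.sqrt 3 - 1) := by
    rw [show p - 2 = (p-1) - 1 by ring, Real.rpow_sub ht, Real.rpow_one]
  have hval : 4 * ((2 * -Real.sin x) * p * (2 * Real.cos x) ^ (p - 1)) +
        2 * (((0 * (1 - Real.tan x) - Real.sqrt 2 * (0 - 1 / Real.cos x ^ 2)) / (1 - Real.tan x) ^ 2)
          * p * (Real.sqrt 2 / (1 - Real.tan x)) ^ (p - 1))
      = Real.sqrt 3 * p * 2 ^ (1 + p / 2) / (Real.sqrt 3 - 1) ^ (p - 2) := by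
    rw [hsinv, hc2, h1tanv, hbase]
    have hcollect : ∀ a b R : ℝ, 4 * (a * p * R) + 2 * (b * p * R) = (4 * a + 2 * b) * p * R := by
      intro a b R; ring
    rw [hcollect]
    rw [hcoef, Real.div_rpow (Real.sqrt_nonneg 2) ht.le]
    rw [hpow2, hts]
    have hA2 : 0 < Real.sqrt 2 ^ (p - 1) := Real.rpow_pos_of_pos h2pos _
    have hB2 : 0 < (Real.sqrt 3 - 1) ^ (p - 1) := Real.rpow_pos_of_pos ht _
    field_simp
  constructor
  · rw [← hval]; exact hE
  · exact div_pos (by positivity) (Real.rpow_pos_of_pos ht _)
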